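/- Let K, n be positive integers and for k=1,…,K let M_k be n×m_k column-interval (0,1)-matrices and M_k' integer matrices with M_k' ≡ M_k (mod 2) entrywise. Set A_k = M_k M_k^T and A_k' = M_k'(M_k')^T. Then for all t_k ≥ 0 and all 0 < p ≤ 1: (Σᵢ λᵢ(Σ_k t_k A_k)^p)^{1/p} ≤ (Σᵢ λᵢ(Σ_k t_k A_k')^p)^{1/p}, where λᵢ(A) denote the eigenvalues of the positive semidefinite matrix A. -/

import Mathlib

/-!
The identity is itself a column-interval matrix, so `1 + s • A` is a weighted Gram matrix
`B * diagonal w * Bᵀ` of a single column-interval matrix `B` (the `M k` side by side, then `1`),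
and `1 + s • A'` is the same with a matrix `B' ≡ B [ZMOD 2]`. By Cauchy–Binet both determinants
are nonnegative combinations of the squared maximal minors `det (B_g) ^ 2`, `det (B'_g) ^ 2`.
Subtracting from each row the next one turns an interval column into a column with at most one
`1` and at most one `-1`, so `det (B_g) ∈ {0, ±1}`; since `det (B'_g) ≡ det (B_g) [ZMOD 2]`, this
gives `det (B_g) ^ 2 ≤ det (B'_g) ^ 2`, hence `det (1 + s • A) ≤ det (1 + s • A')` for `s > 0`.
Taking logarithms, `∑ log (1 + s λᵢ) ≤ ∑ log (1 + s λ'ᵢ)`; integrating against `s ^ (-1 - p) ds`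
and using `∫₀^∞ log (1 + s x) s ^ (-1 - p) ds = c_p x ^ p` gives `∑ λᵢ ^ p ≤ ∑ λ'ᵢ ^ p` for
`p < 1`, and `p = 1` follows by letting `p → 1`.
-/

open Matrix

namespace Matrix

theorem abs_det_le_one_of_col_entries_distinct :
    ∀ {n : ℕ} (C : Matrix (Fin n) (Fin n) ℤ), (∀ i j, |C i j| ≤ 1) →
      (∀ j i i', i ≠ i' → C i j ≠ 0 → C i j ≠ C i' j) → |C.det| ≤ 1
  | 0, C, _, _ => by simp
  | n + 1, C, hC, hdist => by
    -- Either some column has a single nonzero entry and we expand along it, or every column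
    -- holds exactly one `1` and one `-1`, so that the rows sum to zero.
    by_cases hsparse : ∃ j i, ∀ i', i' ≠ i → C i' j = 0
    · obtain ⟨j, i, hi⟩ := hsparse
      have hminor := abs_det_le_one_of_col_entries_distinct (C.submatrix i.succAbove j.succAbove)
        (fun _ _ => hC _ _) (fun _ _ _ hne => hdist _ _ _ (Fin.succAbove_right_injective.ne hne))
      rw [det_succ_column C j, Finset.sum_eq_single i (fun i' _ hi' => by simp [hi i' hi'])
        (by simp), abs_mul, abs_mul, abs_pow, abs_neg, abs_one, one_pow, one_mul]
      exact mul_le_one₀ (hC i j) (abs_nonneg _) hminor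
    · push Not at hsparse
      have hcol : ∀ j, ∑ i, C i j = 0 := by
        intro j
        obtain ⟨i₁, -, h₁⟩ := hsparse j 0
        obtain ⟨i₂, h₂₁, h₂⟩ := hsparse j i₁
        have hb₁ := hC i₁ j
        have hb₂ := hC i₂ j
        have h₁₂ := hdist j i₁ i₂ h₂₁.symm h₁
        rw [Fintype.sum_eq_add i₁ i₂ h₂₁.symm]
        · rw [abs_le] at hb₁ hb₂
          omega
        rintro i ⟨hi₁, hi₂⟩
        by_contra hi
        have hb := hC i j
        have hne₁ := hdist j i i₁ hi₁ hi
        have hne₂ := hdist j i i₂ hi₂ hi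
        rw [abs_le] at hb₁ hb₂ hb
        omega
      suffices C.det = 0 by simp [this]
      rw [← exists_vecMul_eq_zero_iff]
      exact ⟨1, one_ne_zero, funext fun j => by simpa [vecMul, dotProduct] using hcol j⟩

theorem det_modEq {m : Type*} [Fintype m] [DecidableEq m] {A B : Matrix m m ℤ} {N : ℤ}
    (h : ∀ i j, A i j ≡ B i j [ZMOD N]) :
    A.det ≡ B.det [ZMOD N] := by
  rw [det_apply', det_apply']
  exact Int.ModEq.sum fun σ _ => (Int.ModEq.prod fun i _ => h _ _).mul_left _

section CauchyBinet

variable {R m ι : Type*} [CommRing R] [Fintype m] [DecidableEq m] [Fintype ι]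

theorem det_mul_eq_sum_prod_mul_det_submatrix (B : Matrix m ι R) (C : Matrix ι m R) :
    (B * C).det = ∑ g : m → ι, (∏ i, C (g i) i) * (B.submatrix id g).det := by
  simp only [det_apply', mul_apply, Finset.prod_univ_sum, Finset.mul_sum, Fintype.piFinset_univ]
  rw [Finset.sum_comm]
  refine Finset.sum_congr rfl fun g _ => ?_
  simp only [Finset.prod_mul_distrib, submatrix_apply, id]
  exact Finset.sum_congr rfl fun σ _ => by ring

theorem factorial_card_mul_det_mul (B : Matrix m ι R) (C : Matrix ι m R) :
    ((Fintype.card m).factorial : R) * (B * C).det =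
      ∑ g : m → ι, (B.submatrix id g).det * (C.submatrix g id).det := by
  -- Summing the expansion over the reorderings `g ∘ τ` of the column choices assembles
  -- `∑ τ, sign τ * ∏ i, C (g (τ i)) i` into `det (C.submatrix g id)`.
  set F : (m → ι) → R := fun g => (∏ i, C (g i) i) * (B.submatrix id g).det
  have hperm : ∀ (τ : Equiv.Perm m) (g : m → ι),
      F (g ∘ τ) = Equiv.Perm.sign τ * (∏ i, C (g (τ i)) i) * (B.submatrix id g).det := by
    intro τ g
    simp only [F, Function.comp_apply]
    rw [show B.submatrix id (g ∘ τ) = (B.submatrix id g).submatrix id τ from rfl, det_permute']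
    ring
  calc ((Fintype.card m).factorial : R) * (B * C).det
      = ∑ τ : Equiv.Perm m, ∑ g, F (g ∘ τ) := by
        rw [← Fintype.card_perm, ← nsmul_eq_mul, ← Finset.card_univ, ← Finset.sum_const,
          det_mul_eq_sum_prod_mul_det_submatrix]
        exact Finset.sum_congr rfl fun τ _ =>
          (Equiv.sum_comp (Equiv.arrowCongr τ.symm (Equiv.refl ι)) F).symm
    _ = ∑ g : m → ι, (B.submatrix id g).det * (C.submatrix g id).det := by
        simp only [hperm]
        rw [Finset.sum_comm]
        refine Finset.sum_congr rfl fun g _ => ?_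
        rw [det_apply' (C.submatrix g id), Finset.mul_sum, Finset.sum_congr rfl]
        intro τ _
        simp only [submatrix_apply, id]
        ring

theorem factorial_card_mul_det_mul_diagonal_mul_transpose [DecidableEq ι] (B : Matrix m ι R)
    (w : ι → R) :
    ((Fintype.card m).factorial : R) * (B * diagonal w * Bᵀ).det =
      ∑ g : m → ι, (∏ i, w (g i)) * (B.submatrix id g).det ^ 2 := by
  rw [Matrix.mul_assoc, factorial_card_mul_det_mul]
  refine Finset.sum_congr rfl fun g _ => ?_
  have : (diagonal w * Bᵀ).submatrix g id = of fun i j => w (g i) * (B.submatrix id g)ᵀ i j := by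
    ext i j
    simp
  rw [this, det_mul_column, det_transpose]
  ring

end CauchyBinet

def upShift (R : Type*) [Zero R] [One R] (n : ℕ) : Matrix (Fin n) (Fin n) R :=
  of fun i l => if (l : ℕ) = i + 1 then 1 else 0

theorem upShift_mul_apply {R ι : Type*} [Semiring R] {n : ℕ} (C : Matrix (Fin n) ι R)
    (i : Fin n) (j : ι) :
    (upShift R n * C) i j = if h : (i : ℕ) + 1 < n then C ⟨i + 1, h⟩ j else 0 := by
  simp only [upShift, mul_apply, of_apply, ite_mul, one_mul, zero_mul]
  split_ifs with h
  · rw [Finset.sum_eq_single ⟨i + 1, h⟩ (fun l _ hl => if_neg fun h' => hl (Fin.ext h'))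
      (by simp)]
    simp
  · exact Finset.sum_eq_zero fun l _ => if_neg fun h' => h (by omega)

theorem det_one_sub_upShift (R : Type*) [CommRing R] (n : ℕ) : (1 - upShift R n).det = 1 := by
  rw [det_of_isUpperTriangular]
  · simp [upShift]
  · intro i l hli
    have hli : (l : ℕ) < i := hli
    have hne : (l : ℕ) ≠ i + 1 := by omega
    have hil : i ≠ l := fun h => by simp [h] at hli
    simp [upShift, hne, hil]

def rowDiff {R ι : Type*} [Ring R] {n : ℕ} (C : Matrix (Fin n) ι R) : Matrix (Fin n) ι R :=
  (1 - upShift R n) * C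

theorem rowDiff_apply {R ι : Type*} [Ring R] {n : ℕ} (C : Matrix (Fin n) ι R) (i : Fin n) (j : ι) :
    rowDiff C i j = C i j - if h : (i : ℕ) + 1 < n then C ⟨i + 1, h⟩ j else 0 := by
  rw [rowDiff, Matrix.sub_mul, Matrix.one_mul, sub_apply, upShift_mul_apply]

theorem det_rowDiff {R : Type*} [CommRing R] {n : ℕ} (C : Matrix (Fin n) (Fin n) R) :
    (rowDiff C).det = C.det := by
  rw [rowDiff, det_mul, det_one_sub_upShift, one_mul]

def IsColumnInterval {n : ℕ} {ι : Type*} (C : Matrix (Fin n) ι ℤ) : Prop :=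
  (∀ i j, C i j = 0 ∨ C i j = 1) ∧
    ∀ j (i₁ i₂ i₃ : Fin n), i₁ ≤ i₂ → i₂ ≤ i₃ → C i₁ j = 1 → C i₃ j = 1 → C i₂ j = 1

theorem isColumnInterval_one (n : ℕ) : (1 : Matrix (Fin n) (Fin n) ℤ).IsColumnInterval := by
  refine ⟨fun i j => ?_, fun j i₁ i₂ i₃ h₁₂ h₂₃ h₁ h₃ => ?_⟩
  · rw [one_apply]
    split_ifs <;> simp
  · rw [one_apply] at h₁ h₃ ⊢
    split_ifs at h₁ h₃ with e₁ e₃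
    · subst e₁ e₃
      simp [le_antisymm h₂₃ h₁₂]
    all_goals omega

namespace IsColumnInterval

variable {n : ℕ} {ι : Type*} {C : Matrix (Fin n) ι ℤ}

theorem submatrix_col {κ : Type*} (hC : C.IsColumnInterval) (g : κ → ι) :
    (C.submatrix id g).IsColumnInterval :=
  ⟨fun i j => hC.1 i (g j), fun j => hC.2 (g j)⟩

theorem fromCols {κ : Type*} {D : Matrix (Fin n) κ ℤ} (hC : C.IsColumnInterval)
    (hD : D.IsColumnInterval) : (C.fromCols D).IsColumnInterval := by
  refine ⟨fun i j => ?_, fun j => ?_⟩ <;> rcases j with j | j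
  exacts [hC.1 i j, hD.1 i j, hC.2 j, hD.2 j]

theorem abs_rowDiff_apply_le (hC : C.IsColumnInterval) (i : Fin n) (j : ι) :
    |rowDiff C i j| ≤ 1 := by
  rw [rowDiff_apply, abs_le]
  have := hC.1 i j
  split_ifs with h
  · have := hC.1 ⟨i + 1, h⟩ j
    omega
  · omega

theorem of_rowDiff_apply_eq_one (hC : C.IsColumnInterval) {i : Fin n} {j : ι}
    (hij : rowDiff C i j = 1) :
    C i j = 1 ∧ ∀ h : (i : ℕ) + 1 < n, C ⟨i + 1, h⟩ j = 0 := by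
  rw [rowDiff_apply] at hij
  have := hC.1 i j
  split_ifs at hij with h
  · have := hC.1 ⟨i + 1, h⟩ j
    exact ⟨by omega, fun _ => by omega⟩
  · exact ⟨by omega, fun h' => absurd h' h⟩

theorem of_rowDiff_apply_eq_neg_one (hC : C.IsColumnInterval) {i : Fin n} {j : ι}
    (hij : rowDiff C i j = -1) :
    C i j = 0 ∧ ∃ h : (i : ℕ) + 1 < n, C ⟨i + 1, h⟩ j = 1 := by
  rw [rowDiff_apply] at hij
  have := hC.1 i j
  split_ifs at hij with h
  · have := hC.1 ⟨i + 1, h⟩ j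
    exact ⟨by omega, h, by omega⟩
  · omega

theorem rowDiff_apply_ne (hC : C.IsColumnInterval) {i i' : Fin n} (hii' : i < i')
    (j : ι) (hne : rowDiff C i j ≠ 0) :
    rowDiff C i j ≠ rowDiff C i' j := by
  intro heq
  have hi1 : (i : ℕ) + 1 < n := lt_of_le_of_lt hii' i'.isLt
  have hsucc : i ≤ ⟨i + 1, hi1⟩ := Fin.le_iff_val_le_val.mpr (Nat.le_succ _)
  have habs := abs_le.mp (hC.abs_rowDiff_apply_le i j)
  rcases (show rowDiff C i j = 1 ∨ rowDiff C i j = -1 by omega) with h | h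
  · obtain ⟨hi, hi0⟩ := hC.of_rowDiff_apply_eq_one h
    obtain ⟨hi', -⟩ := hC.of_rowDiff_apply_eq_one (heq ▸ h)
    simpa [hi0 hi1] using hC.2 j i _ i' hsucc hii' hi hi'
  · obtain ⟨-, hi1, hi⟩ := hC.of_rowDiff_apply_eq_neg_one h
    obtain ⟨hi', hi'1, hi'next⟩ := hC.of_rowDiff_apply_eq_neg_one (heq ▸ h)
    simpa [hi'] using hC.2 j _ i' ⟨i' + 1, hi'1⟩ hii'
      (Fin.le_iff_val_le_val.mpr (Nat.le_succ _)) hi hi'next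

theorem abs_det_le_one {C : Matrix (Fin n) (Fin n) ℤ} (hC : C.IsColumnInterval) :
    |C.det| ≤ 1 := by
  rw [← det_rowDiff]
  refine abs_det_le_one_of_col_entries_distinct _ hC.abs_rowDiff_apply_le
    fun j i i' hii' => ?_
  rcases hii'.lt_or_gt with h | h
  · exact hC.rowDiff_apply_ne h j
  · exact fun hne heq => hC.rowDiff_apply_ne h j (heq ▸ hne) heq.symm

theorem sq_det_le_sq_det {C C' : Matrix (Fin n) (Fin n) ℤ}
    (hC : C.IsColumnInterval) (hC' : ∀ i j, C' i j ≡ C i j [ZMOD 2]) :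
    C.det ^ 2 ≤ C'.det ^ 2 := by
  have h1 := abs_le.mp hC.abs_det_le_one
  have h2 : C'.det % 2 = C.det % 2 := det_modEq hC'
  rw [sq_le_sq]
  rcases abs_cases C.det with h | h <;> rcases abs_cases C'.det with h' | h' <;> omega

theorem det_mul_diagonal_mul_transpose_le [Fintype ι] [DecidableEq ι]
    {B B' : Matrix (Fin n) ι ℤ} (hB : B.IsColumnInterval) (hB' : ∀ i j, B' i j ≡ B i j [ZMOD 2])
    {w : ι → ℝ} (hw : ∀ j, 0 ≤ w j) :
    (B.map ((↑) : ℤ → ℝ) * diagonal w * (B.map ((↑) : ℤ → ℝ))ᵀ).det ≤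
      (B'.map ((↑) : ℤ → ℝ) * diagonal w * (B'.map ((↑) : ℤ → ℝ))ᵀ).det := by
  have hcast : ∀ (D : Matrix (Fin n) ι ℤ) (g : Fin n → ι),
      ((D.map ((↑) : ℤ → ℝ)).submatrix id g).det = ((D.submatrix id g).det : ℝ) :=
    fun D g => (Int.cast_det _).symm
  refine le_of_mul_le_mul_left ?_ (Nat.cast_pos.mpr (Fintype.card (Fin n)).factorial_pos)
  simp only [factorial_card_mul_det_mul_diagonal_mul_transpose, hcast]
  refine Finset.sum_le_sum fun g _ =>
    mul_le_mul_of_nonneg_left ?_ (Finset.prod_nonneg fun i _ => hw (g i))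
  exact_mod_cast (hB.submatrix_col g).sq_det_le_sq_det fun i j => hB' i (g j)

end IsColumnInterval

theorem det_one_add_sum_smul_gram_le {κ : Type*} [Fintype κ] {ι : κ → Type*}
    [∀ k, Fintype (ι k)] {n : ℕ} {M M' : ∀ k, Matrix (Fin n) (ι k) ℤ}
    (hM : ∀ k, (M k).IsColumnInterval) (hM' : ∀ k i j, M' k i j ≡ M k i j [ZMOD 2])
    {c : κ → ℝ} (hc : ∀ k, 0 ≤ c k) :
    (1 + ∑ k, c k • ((M k * (M k)ᵀ).map ((↑) : ℤ → ℝ))).det ≤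
      (1 + ∑ k, c k • ((M' k * (M' k)ᵀ).map ((↑) : ℤ → ℝ))).det := by
  classical
  let B (N : ∀ k, Matrix (Fin n) (ι k) ℤ) : Matrix (Fin n) ((Σ k, ι k) ⊕ Fin n) ℝ :=
    Matrix.map ((of fun i kl => N kl.1 i kl.2).fromCols 1) ((↑) : ℤ → ℝ)
  let w : (Σ k, ι k) ⊕ Fin n → ℝ := Sum.elim (fun kl => c kl.1) 1
  have hconcat : ∀ N : ∀ k, Matrix (Fin n) (ι k) ℤ,
      1 + ∑ k, c k • ((N k * (N k)ᵀ).map ((↑) : ℤ → ℝ)) =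
        B N * diagonal w * (B N)ᵀ := by
    intro N
    ext i j
    rw [mul_apply]
    simp only [mul_diagonal, Fintype.sum_sum_type, add_comm]
    simp [B, w, Fintype.sum_sigma, Matrix.sum_apply, mul_apply, Finset.mul_sum, one_apply,
      mul_assoc, mul_left_comm]
  rw [hconcat, hconcat]
  refine IsColumnInterval.det_mul_diagonal_mul_transpose_le
    (IsColumnInterval.fromCols ⟨fun i kl => (hM kl.1).1 i kl.2, fun kl => (hM kl.1).2 kl.2⟩
      (isColumnInterval_one n)) (fun i kl => ?_) fun kl => ?_ <;> rcases kl with kl | j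
  exacts [hM' kl.1 i kl.2, Int.ModEq.refl _, hc kl.1, zero_le_one]

theorem posSemidef_sum_smul_gram {κ : Type*} [Fintype κ] {ι : κ → Type*} [∀ k, Fintype (ι k)]
    {m : Type*} [Fintype m] (M : ∀ k, Matrix m (ι k) ℤ) {c : κ → ℝ} (hc : ∀ k, 0 ≤ c k) :
    (∑ k, c k • ((M k * (M k)ᵀ).map ((↑) : ℤ → ℝ))).PosSemidef := by
  refine posSemidef_sum _ fun k _ => PosSemidef.smul ?_ (hc k)
  have hgram : (M k * (M k)ᵀ).map ((↑) : ℤ → ℝ) =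
      (M k).map ((↑) : ℤ → ℝ) * ((M k).map ((↑) : ℤ → ℝ))ᴴ := by
    ext i j
    simp [mul_apply]
  rw [hgram]
  exact posSemidef_self_mul_conjTranspose _

theorem IsHermitian.det_one_add_smul {m : Type*} [Fintype m] [DecidableEq m]
    {A : Matrix m m ℝ} (hA : A.IsHermitian) (s : ℝ) :
    (1 + s • A).det = ∏ i, (1 + s * hA.eigenvalues i) := by
  set U := hA.eigenvectorUnitary
  have hconj : 1 + s • A =
      Unitary.conjStarAlgAut ℝ _ U (diagonal fun i => 1 + s * hA.eigenvalues i) := by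
    conv_lhs => rw [hA.spectral_theorem]
    rw [← map_one (Unitary.conjStarAlgAut ℝ _ U), ← map_smul, ← map_add, ← diagonal_one,
      ← diagonal_smul, ← diagonal_add]
    rfl
  rw [hconj, Unitary.conjStarAlgAut_apply, det_mul, det_mul, det_diagonal, mul_comm, ← mul_assoc,
    ← det_mul, Unitary.coe_star_mul_self, det_one, one_mul]

end Matrix

section LogIntegral

open MeasureTheory Set Filter Topology Real

variable {p : ℝ}

theorem integrableOn_log_one_add_mul_rpow (hp0 : 0 < p) (hp1 : p < 1) :
    IntegrableOn (fun u : ℝ => log (1 + u) * u ^ (-1 - p)) (Ioi 0) := by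
  have hcont : ContinuousOn (fun u : ℝ => log (1 + u) * u ^ (-1 - p)) (Ioi 0) := fun u hu =>
    (((continuousAt_const.add continuousAt_id).log (by simp at hu ⊢; linarith)).mul
      (continuousAt_rpow_const u _ (Or.inl (ne_of_gt hu)))).continuousWithinAt
  have hnonneg : ∀ u ∈ Ioi (0 : ℝ), ‖log (1 + u) * u ^ (-1 - p)‖ = log (1 + u) * u ^ (-1 - p) :=
    fun u (hu : 0 < u) => Real.norm_of_nonneg
      (mul_nonneg (log_nonneg (by linarith)) (rpow_nonneg hu.le _))
  have hsmall : IntegrableOn (fun u : ℝ => log (1 + u) * u ^ (-1 - p)) (Ioc 0 1) := by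
    have hbound : IntegrableOn (fun u : ℝ => u ^ (-p)) (Ioc 0 1) :=
      (intervalIntegrable_iff_integrableOn_Ioc_of_le zero_le_one).mp
        (intervalIntegral.intervalIntegrable_rpow' (by linarith))
    refine hbound.mono' ((hcont.mono Ioc_subset_Ioi_self).aestronglyMeasurable measurableSet_Ioc)
      ((ae_restrict_iff' measurableSet_Ioc).mpr (ae_of_all _ fun u ⟨hu0, _⟩ => ?_))
    rw [hnonneg u hu0]
    calc log (1 + u) * u ^ (-1 - p) ≤ u * u ^ (-1 - p) := by
          gcongr
          linarith [log_le_sub_one_of_pos (by linarith : (0 : ℝ) < 1 + u)]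
      _ = u ^ (-p) := by rw [← rpow_one_add' hu0.le (by ring_nf; linarith)]; ring_nf
  have hlarge : IntegrableOn (fun u : ℝ => log (1 + u) * u ^ (-1 - p)) (Ioi 1) := by
    have hbound : IntegrableOn (fun u : ℝ => (2 / p * 2 ^ (p / 2)) * u ^ (p / 2 - 1 - p)) (Ioi 1) :=
      (integrableOn_Ioi_rpow_of_lt (by linarith) one_pos).const_mul _
    refine hbound.mono' ((hcont.mono (Ioi_subset_Ioi zero_le_one)).aestronglyMeasurable
      measurableSet_Ioi) ((ae_restrict_iff' measurableSet_Ioi).mpr (ae_of_all _ fun u hu => ?_))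
    have hu1 : 1 < u := hu
    rw [hnonneg u (zero_lt_one.trans hu1)]
    calc log (1 + u) * u ^ (-1 - p)
        ≤ (1 + u) ^ (p / 2) / (p / 2) * u ^ (-1 - p) := by
          gcongr
          exact log_le_rpow_div (by linarith) (by linarith)
      _ ≤ (2 * u) ^ (p / 2) / (p / 2) * u ^ (-1 - p) := by gcongr; linarith
      _ = (2 / p * 2 ^ (p / 2)) * u ^ (p / 2 - 1 - p) := by
          rw [show p / 2 - 1 - p = p / 2 + (-1 - p) by ring, rpow_add (by linarith),
            mul_rpow zero_le_two (by linarith)]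
          field_simp
  simpa [Ioc_union_Ioi_eq_Ioi zero_le_one] using hsmall.union hlarge

theorem integral_log_one_add_mul_rpow_pos (hp0 : 0 < p) (hp1 : p < 1) :
    0 < ∫ u in Ioi (0 : ℝ), log (1 + u) * u ^ (-1 - p) := by
  have hpos : ∀ u ∈ Ioi (0 : ℝ), 0 < log (1 + u) * u ^ (-1 - p) := fun u (hu : 0 < u) =>
    mul_pos (log_pos (by linarith)) (rpow_pos_of_pos hu _)
  rw [setIntegral_pos_iff_support_of_nonneg_ae
    ((ae_restrict_iff' measurableSet_Ioi).mpr (ae_of_all _ fun u hu => (hpos u hu).le))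
    (integrableOn_log_one_add_mul_rpow hp0 hp1), inter_eq_self_of_subset_right
    fun u hu => Function.mem_support.mpr (hpos u hu).ne']
  simp

theorem log_one_add_mul_mul_rpow_eq {x t : ℝ} (hx : 0 < x) (ht : 0 < t) :
    log (1 + t * x) * t ^ (-1 - p) = x ^ (1 + p) * (log (1 + x * t) * (x * t) ^ (-1 - p)) := by
  rw [mul_rpow hx.le ht.le, mul_comm t x, mul_left_comm, ← mul_assoc (x ^ (1 + p)),
    ← rpow_add hx]
  simp

theorem integrableOn_log_one_add_mul_mul_rpow (hp0 : 0 < p) (hp1 : p < 1) {x : ℝ} (hx : 0 ≤ x) :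
    IntegrableOn (fun t : ℝ => log (1 + t * x) * t ^ (-1 - p)) (Ioi 0) := by
  rcases hx.eq_or_lt with rfl | hx
  · simp
  refine IntegrableOn.congr_fun ?_ (fun t ht => (log_one_add_mul_mul_rpow_eq hx ht).symm)
    measurableSet_Ioi
  refine Integrable.const_mul ?_ _
  exact (integrableOn_Ioi_comp_mul_left_iff (fun u => log (1 + u) * u ^ (-1 - p)) 0 hx).mpr
    (by simpa using integrableOn_log_one_add_mul_rpow hp0 hp1)

theorem integral_log_one_add_mul_mul_rpow (hp0 : 0 < p) {x : ℝ} (hx : 0 ≤ x) :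
    ∫ t in Ioi (0 : ℝ), log (1 + t * x) * t ^ (-1 - p) =
      (∫ u in Ioi (0 : ℝ), log (1 + u) * u ^ (-1 - p)) * x ^ p := by
  rcases hx.eq_or_lt with rfl | hx
  · simp [zero_rpow hp0.ne']
  rw [setIntegral_congr_fun measurableSet_Ioi fun t ht => log_one_add_mul_mul_rpow_eq hx ht,
    integral_const_mul, integral_comp_mul_left_Ioi (fun u => log (1 + u) * u ^ (-1 - p)) 0 hx,
    mul_zero, smul_eq_mul, ← mul_assoc, mul_comm, ← rpow_neg_one, ← rpow_add hx]
  ring_nf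

theorem sum_rpow_le_sum_rpow_of_sum_log_le_of_lt_one {ι : Type*} [Fintype ι] {a b : ι → ℝ}
    (ha : ∀ i, 0 ≤ a i) (hb : ∀ i, 0 ≤ b i) (hp0 : 0 < p) (hp1 : p < 1)
    (h : ∀ t > 0, ∑ i, log (1 + t * a i) ≤ ∑ i, log (1 + t * b i)) :
    ∑ i, a i ^ p ≤ ∑ i, b i ^ p := by
  set c := ∫ u in Ioi (0 : ℝ), log (1 + u) * u ^ (-1 - p)
  have hint : ∀ x : ι → ℝ, (∀ i, 0 ≤ x i) →
      ∫ t in Ioi (0 : ℝ), ∑ i, log (1 + t * x i) * t ^ (-1 - p) = c * ∑ i, x i ^ p := by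
    intro x hx
    rw [integral_finsetSum _ fun i _ => integrableOn_log_one_add_mul_mul_rpow hp0 hp1 (hx i),
      Finset.mul_sum]
    exact Finset.sum_congr rfl fun i _ => integral_log_one_add_mul_mul_rpow hp0 (hx i)
  refine le_of_mul_le_mul_left ?_ (integral_log_one_add_mul_rpow_pos hp0 hp1)
  rw [← hint a ha, ← hint b hb]
  refine setIntegral_mono_on
    (integrable_finsetSum _ fun i _ => integrableOn_log_one_add_mul_mul_rpow hp0 hp1 (ha i))
    (integrable_finsetSum _ fun i _ => integrableOn_log_one_add_mul_mul_rpow hp0 hp1 (hb i))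
    measurableSet_Ioi fun t (ht : 0 < t) => ?_
  rw [← Finset.sum_mul, ← Finset.sum_mul]
  exact mul_le_mul_of_nonneg_right (h t ht) (rpow_nonneg ht.le _)

theorem sum_rpow_le_sum_rpow_of_sum_log_le {ι : Type*} [Fintype ι] {a b : ι → ℝ}
    (ha : ∀ i, 0 ≤ a i) (hb : ∀ i, 0 ≤ b i) (hp0 : 0 < p) (hp1 : p ≤ 1)
    (h : ∀ t > 0, ∑ i, log (1 + t * a i) ≤ ∑ i, log (1 + t * b i)) :
    ∑ i, a i ^ p ≤ ∑ i, b i ^ p := by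
  rcases hp1.lt_or_eq with hp1 | rfl
  · exact sum_rpow_le_sum_rpow_of_sum_log_le_of_lt_one ha hb hp0 hp1 h
  have hlim : ∀ x : ι → ℝ, Tendsto (fun q : ℝ => ∑ i, x i ^ q) (𝓝[<] 1) (𝓝 (∑ i, x i ^ (1 : ℝ))) :=
    fun x => tendsto_finsetSum _ fun i _ =>
      (continuousAt_const_rpow' one_ne_zero).tendsto.mono_left nhdsWithin_le_nhds
  refine le_of_tendsto_of_tendsto (hlim a) (hlim b) ?_
  filter_upwards [Ioo_mem_nhdsLT zero_lt_one] with q ⟨hq0, hq1⟩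
  exact sum_rpow_le_sum_rpow_of_sum_log_le_of_lt_one ha hb hq0 hq1 h

end LogIntegral

theorem Matrix.PosSemidef.sum_rpow_eigenvalues_le {m : Type*} [Fintype m] [DecidableEq m]
    {A B : Matrix m m ℝ} (hA : A.PosSemidef) (hB : B.PosSemidef) {p : ℝ} (hp0 : 0 < p)
    (hp1 : p ≤ 1) (h : ∀ s : ℝ, 0 < s → (1 + s • A).det ≤ (1 + s • B).det) :
    ∑ i, hA.isHermitian.eigenvalues i ^ p ≤ ∑ i, hB.isHermitian.eigenvalues i ^ p := by
  refine sum_rpow_le_sum_rpow_of_sum_log_le hA.eigenvalues_nonneg hB.eigenvalues_nonneg hp0 hp1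
    fun s hs => ?_
  have hpos : ∀ {C : Matrix m m ℝ} (hC : C.PosSemidef) i,
      0 < 1 + s * hC.isHermitian.eigenvalues i :=
    fun hC i => by nlinarith [hC.eigenvalues_nonneg i]
  have hlog : ∀ {C : Matrix m m ℝ} (hC : C.PosSemidef),
      Real.log (1 + s • C).det = ∑ i, Real.log (1 + s * hC.isHermitian.eigenvalues i) :=
    fun hC => by
      rw [hC.isHermitian.det_one_add_smul, Real.log_prod fun i _ => (hpos hC i).ne']
  rw [← hlog hA, ← hlog hB]
  refine Real.log_le_log ?_ (h s hs)
  rw [hA.isHermitian.det_one_add_smul]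
  exact Finset.prod_pos fun i _ => hpos hA i

theorem stmt9_general (K n : ℕ) (m : Fin K → ℕ)
    (M M' : ∀ k : Fin K, Matrix (Fin n) (Fin (m k)) ℤ)
    (h01 : ∀ k i j, M k i j = 0 ∨ M k i j = 1)
    (hint : ∀ k j, ∀ i₁ i₂ i₃ : Fin n, i₁ ≤ i₂ → i₂ ≤ i₃ →
      M k i₁ j = 1 → M k i₃ j = 1 → M k i₂ j = 1)
    (hmod : ∀ k i j, M' k i j ≡ M k i j [ZMOD 2])
    (t : Fin K → ℝ) (ht : ∀ k, 0 ≤ t k) (p : ℝ) (hp0 : 0 < p) (hp1 : p ≤ 1)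
    (A A' : Matrix (Fin n) (Fin n) ℝ)
    (hAdef : A = ∑ k, t k • ((M k * (M k)ᵀ).map ((↑) : ℤ → ℝ)))
    (hA'def : A' = ∑ k, t k • ((M' k * (M' k)ᵀ).map ((↑) : ℤ → ℝ)))
    (hA : A.IsHermitian) (hA' : A'.IsHermitian) :
    (∑ i, (hA.eigenvalues i) ^ p) ^ (1 / p) ≤
      (∑ i, (hA'.eigenvalues i) ^ p) ^ (1 / p) := by
  have hpsd : A.PosSemidef := hAdef ▸ posSemidef_sum_smul_gram M ht
  have hpsd' : A'.PosSemidef := hA'def ▸ posSemidef_sum_smul_gram M' ht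
  have hdet : ∀ s : ℝ, 0 < s → (1 + s • A).det ≤ (1 + s • A').det := by
    intro s hs
    simp only [hAdef, hA'def, Finset.smul_sum, smul_smul]
    exact det_one_add_sum_smul_gram_le (fun k => ⟨h01 k, hint k⟩) hmod
      fun k => mul_nonneg hs.le (ht k)
  exact Real.rpow_le_rpow
    (Finset.sum_nonneg fun i _ => Real.rpow_nonneg (hpsd.eigenvalues_nonneg i) p)
    (hpsd.sum_rpow_eigenvalues_le hpsd' hp0 hp1 hdet) (by positivity)

theorem stmt9 (K n : ℕ) (hK : 0 < K) (hn : 0 < n) (m : Fin K → ℕ)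
    (M M' : ∀ k : Fin K, Matrix (Fin n) (Fin (m k)) ℤ)
    (h01 : ∀ k i j, M k i j = 0 ∨ M k i j = 1)
    (hint : ∀ k j, ∀ i₁ i₂ i₃ : Fin n, i₁ ≤ i₂ → i₂ ≤ i₃ →
      M k i₁ j = 1 → M k i₃ j = 1 → M k i₂ j = 1)
    (hmod : ∀ k i j, M' k i j ≡ M k i j [ZMOD 2])
    (t : Fin K → ℝ) (ht : ∀ k, 0 ≤ t k) (p : ℝ) (hp0 : 0 < p) (hp1 : p ≤ 1)
    (A A' : Matrix (Fin n) (Fin n) ℝ)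
    (hAdef : A = ∑ k, t k • ((M k * (M k)ᵀ).map ((↑) : ℤ → ℝ)))
    (hA'def : A' = ∑ k, t k • ((M' k * (M' k)ᵀ).map ((↑) : ℤ → ℝ)))
    (hA : A.IsHermitian) (hA' : A'.IsHermitian) :
    (∑ i, (hA.eigenvalues i) ^ p) ^ (1 / p) ≤
      (∑ i, (hA'.eigenvalues i) ^ p) ^ (1 / p) :=
  stmt9_general K n m M M' h01 hint hmod t ht p hp0 hp1 A A' hAdef hA'def hA hA'
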